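/- Let A⁺ ⊆ A be commutative rings such that the inclusion A⁺ → A is weakly surjective, and let f ∈ A. Let A⁺[f] be the subring of A generated by A⁺ and f, let A_f be the localization of A at f, let A⁺[1/f] be the subring of A_f generated by the image of A⁺ and 1/f, let C be the integral closure of A⁺[f] in A, and let C_f be the integral closure of A⁺[1/f] in A_f. Then the natural homomorphisms A ⊗_{A⁺} C → A and A ⊗_{A⁺} C_f → A_f are isomorphisms. If in addition A⁺ ⊆ A is a Prüfer extension and A is noetherian, then A⁺[f] is integrally closed in A and A⁺[1/f] is integrally closed in A_f (so C = A⁺[f] and C_f = A⁺[1/f]). -/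

import Mathlib

/-!
Weak surjectivity implies that for every `x ∈ A` the ideal `{s ∈ A⁺ | s x ∈ A⁺}` generates the
unit ideal of `A`. Writing `1 = ∑ bᵢ sᵢ` with `sᵢ x ∈ A⁺` lets one move any factor `x ∈ A`
across the tensor sign over `A⁺`. So for a localization `T⁻¹A` and an `A⁺`-submodule
`M ⊆ T⁻¹A` containing the fractions `1/t`, every tensor in `A ⊗_{A⁺} M` collapses to a single
`a ⊗ 1/t`, and multiplication `A ⊗_{A⁺} M → T⁻¹A` is visibly bijective.

For integral closedness: by the Prüfer condition, locally at each maximal ideal `P` of `A⁺` an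
element of `A` lies in `A⁺_P` or is a unit with inverse in `A⁺_P`; writing elements of `A_f`
as `y / fᵐ` propagates this dichotomy to `A⁺[1/f] ⊆ A_f`. If `x` is integral over such a `B`
and `β x = σ` with `β ∈ B`, then `σⁿ x ∈ B`. Hence the ideal of those `σ ∈ A⁺` with some
`σⁿ x ∈ B` lies in no maximal ideal, and `x ∈ B`.
-/

open TensorProduct

/-- A subring `S` of a commutative ring `R` makes `(R, S)` a *local pair* if `R` is local and
every element of `R` not lying in `S` is a unit of `R` whose inverse lies in `S`. -/
def Subring.IsLocalPair {R : Type*} [CommRing R] (S : Subring R) : Prop :=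
  IsLocalRing R ∧ ∀ x : R, x ∉ S → ∃ y ∈ S, x * y = 1

/-- A subring `S ⊆ R` is a *Prüfer extension* if for every maximal ideal `P` of `S`,
the localizations of `S` and `R` at the multiplicative set `S \ P` form a local pair. -/
def Subring.IsPruferExtension {R : Type*} [CommRing R] (S : Subring R) : Prop :=
  ∀ (P : Ideal ↥S) (hP : P.IsMaximal),
    haveI : P.IsPrime := hP.isPrime
    Subring.IsLocalPair
      (RingHom.range
        (IsLocalization.map (Localization (P.primeCompl.map (algebraMap ↥S R)))
          (algebraMap ↥S R) (Submonoid.le_comap_map P.primeCompl) :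
          Localization P.primeCompl →+* Localization (P.primeCompl.map (algebraMap ↥S R))))

/-- A ring homomorphism `f : R → A` is *weakly surjective* if for every prime ideal `p` of `R`
with `pA ≠ A`, the induced map on localizations `R_p → A_p` is surjective, where `A_p` is the
localization of `A` at the image of the multiplicative set `R ∖ p`. -/
def RingHom.WeaklySurjective {R A : Type*} [CommRing R] [CommRing A] (f : R →+* A) : Prop :=
  ∀ (p : Ideal R) (hp : p.IsPrime), Ideal.map f p ≠ ⊤ →
    haveI : p.IsPrime := hp
    Function.Surjective
      (IsLocalization.map (Localization (p.primeCompl.map f)) f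
        (Submonoid.le_comap_map p.primeCompl) :
        Localization p.primeCompl →+* Localization (p.primeCompl.map f))

section TensorProduct

variable {R A : Type*} [CommRing R] [CommRing A] [Algebra R A]

theorem tmul_mk_smul_eq_mul_tmul
    (hD : ∀ x : A, Ideal.map (algebraMap R A) ((1 : Submodule R A).colon {x}) = ⊤)
    {N : Type*} [AddCommGroup N] [Module A N] [Module R N] [IsScalarTower R A N]
    {M : Submodule R N} (a x : A) (m : M) (hxm : x • (m : N) ∈ M) :
    a ⊗ₜ[R] (⟨x • (m : N), hxm⟩ : M) = (a * x) ⊗ₜ[R] m := by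
  suffices H : ∀ y ∈ Ideal.map (algebraMap R A) ((1 : Submodule R A).colon {x}), ∀ a : A,
      (a * y) ⊗ₜ[R] (⟨x • (m : N), hxm⟩ : M) = (a * y * x) ⊗ₜ[R] m by
    simpa using H 1 (by rw [hD x]; trivial) a
  intro y hy
  induction hy using Submodule.span_induction with
  | mem _ h =>
    obtain ⟨s, hs, rfl⟩ := h
    obtain ⟨r, hr⟩ := Submodule.mem_one.mp (Submodule.mem_colon_singleton.mp hs)
    intro a
    have hsm : s • (⟨x • (m : N), hxm⟩ : M) = r • m :=
      Subtype.ext (by simp [← smul_assoc, ← hr])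
    rw [mul_comm a, ← Algebra.smul_def, smul_tmul, hsm, ← smul_tmul, Algebra.smul_def, hr]
    congr 1
    simp only [Algebra.smul_def]
    ring
  | zero => simp
  | add y z _ _ hy hz => intro a; simp only [mul_add, add_mul, add_tmul, hy, hz]
  | smul c y _ hy => intro a; simpa only [smul_eq_mul, mul_assoc] using hy (a * c)

theorem tensorProduct_bijective_of_isLocalization
    (hD : ∀ x : A, Ideal.map (algebraMap R A) ((1 : Submodule R A).colon {x}) = ⊤)
    (T : Submonoid A) {S : Type*} [CommRing S] [Algebra A S] [Algebra R S]
    [IsScalarTower R A S] [IsLocalization T S] (M : Submodule R S)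
    (hM : ∀ t ∈ T, ∃ c ∈ M, algebraMap A S t * c = 1) (μ : A ⊗[R] M →ₗ[R] S)
    (hμ : ∀ a m, μ (a ⊗ₜ m) = algebraMap A S a * m) :
    Function.Bijective μ := by
  have hM' : ∀ t : T, IsLocalization.mk' S 1 t ∈ M := fun t => by
    obtain ⟨c, hc, htc⟩ := hM t t.2
    rwa [← IsLocalization.eq_mk'_iff_mul_eq.mpr (by rw [mul_comm, htc, map_one])]
  let e : T → M := fun t => ⟨IsLocalization.mk' S 1 t, hM' t⟩
  have raise : ∀ (x : A) (t t' : T), x ⊗ₜ[R] e t = (x * t') ⊗ₜ[R] e (t * t') := by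
    intro x t t'
    have h : (t' : A) • (e (t * t') : S) = e t := by
      rw [Algebra.smul_def, IsLocalization.mul_mk'_eq_mk'_of_mul, mul_comm _ (1 : A),
        IsLocalization.mk'_cancel]
    rw [← tmul_mk_smul_eq_mul_tmul hD _ _ _ (h ▸ (e t).2)]
    exact congrArg _ (Subtype.ext h.symm)
  have rep : ∀ z : A ⊗[R] M, ∃ x t, z = x ⊗ₜ[R] e t := by
    intro z
    induction z using TensorProduct.induction_on with
    | zero => exact ⟨0, 1, (zero_tmul _ _).symm⟩
    | tmul a m =>
      obtain ⟨⟨x, t⟩, hm⟩ := IsLocalization.mk'_surjective T (m : S)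
      have h : x • (e t : S) = m := by
        simp [e, Algebra.smul_def, IsLocalization.mul_mk'_eq_mk'_of_mul, ← hm]
      refine ⟨a * x, t, ?_⟩
      rw [← tmul_mk_smul_eq_mul_tmul hD _ _ _ (h ▸ m.2)]
      exact congrArg _ (Subtype.ext h.symm)
    | add z w hz hw =>
      obtain ⟨x, t, rfl⟩ := hz
      obtain ⟨x', t', rfl⟩ := hw
      refine ⟨x * t' + x' * t, t * t', ?_⟩
      rw [raise x t t', raise x' t' t, mul_comm t', add_tmul]
  have hμe : ∀ x t, μ (x ⊗ₜ e t) = IsLocalization.mk' S x t := by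
    simp [hμ, e, IsLocalization.mul_mk'_eq_mk'_of_mul]
  refine ⟨(injective_iff_map_eq_zero μ).mpr fun z hz => ?_, fun s => ?_⟩
  · obtain ⟨x, t, rfl⟩ := rep z
    obtain ⟨c, hc⟩ := (IsLocalization.mk'_eq_zero_iff x t).mp (hμe x t ▸ hz)
    rw [raise x t c, mul_comm, hc, zero_tmul]
  · obtain ⟨⟨x, t⟩, rfl⟩ := IsLocalization.mk'_surjective T s
    exact ⟨x ⊗ₜ e t, hμe x t⟩

end TensorProduct

section Localization

variable {R A : Type*} [CommRing R] [CommRing A] [Algebra R A] (p : Ideal R) [p.IsPrime]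

theorem exists_smul_eq_smul_of_algebraMap_mul_map_eq (y y' : A) (z : Localization p.primeCompl)
    (h : algebraMap A (Localization (p.primeCompl.map (algebraMap R A))) y *
        IsLocalization.map _ (algebraMap R A) (Submonoid.le_comap_map p.primeCompl) z =
      algebraMap A _ y') :
    ∃ σ ∉ p, ∃ a : R, a • y = σ • y' := by
  obtain ⟨⟨a, s⟩, hz⟩ := IsLocalization.surj p.primeCompl z
  have hmap := congrArg
    (IsLocalization.map (Localization (p.primeCompl.map (algebraMap R A))) (algebraMap R A)
      (Submonoid.le_comap_map p.primeCompl)) hz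
  simp only [map_mul, IsLocalization.map_eq] at hmap
  have : algebraMap A (Localization (p.primeCompl.map (algebraMap R A))) (algebraMap R A a * y) =
      algebraMap A _ (algebraMap R A s * y') := by
    rw [map_mul, map_mul, ← hmap, ← h]
    ring
  obtain ⟨⟨_, u, hu, rfl⟩, hc⟩ :=
    IsLocalization.exists_of_eq (M := p.primeCompl.map (algebraMap R A)) this
  refine ⟨u * s, p.primeCompl.mul_mem hu s.2, u * a, ?_⟩
  simpa only [Algebra.smul_def, map_mul, mul_assoc] using hc

theorem RingHom.WeaklySurjective.map_colon_eq_top (h : (algebraMap R A).WeaklySurjective)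
    (x : A) : Ideal.map (algebraMap R A) ((1 : Submodule R A).colon {x}) = ⊤ := by
  by_contra hne
  obtain ⟨M, hM, hle⟩ := Ideal.exists_le_maximal _ hne
  have : (M.comap (algebraMap R A)).IsPrime := Ideal.IsPrime.comap _
  obtain ⟨z, hz⟩ := h _ inferInstance
    (fun htop => hM.ne_top (top_le_iff.mp (htop ▸ Ideal.map_comap_le))) (algebraMap A _ x)
  obtain ⟨σ, hσ, a, hax⟩ :=
    exists_smul_eq_smul_of_algebraMap_mul_map_eq _ 1 x z (by rw [map_one, one_mul, hz])
  refine hσ (hle (Ideal.mem_map_of_mem _ (Submodule.mem_colon_singleton.mpr ?_)))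
  exact Submodule.mem_one.mpr ⟨a, by rw [← hax, Algebra.smul_def, mul_one]⟩

end Localization

namespace Subring

variable {R S : Type*} [CommRing R] [CommRing S] [Algebra R S]

-- In the localization at `R ∖ P`: `x` lies in `B_P`, resp. `x` is a unit with inverse in `B_P`.
def LocallyMem (B : Subring S) (P : Ideal R) (x : S) : Prop :=
  ∃ σ ∉ P, σ • x ∈ B

def LocallyInvMem (B : Subring S) (P : Ideal R) (x : S) : Prop :=
  ∃ σ ∉ P, ∃ β ∈ B, β * x = algebraMap R S σ

variable {B : Subring S} {P : Ideal R} {x y : S}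

theorem locallyMem_of_mem [P.IsPrime] (hx : x ∈ B) : B.LocallyMem P x :=
  ⟨1, (Ideal.ne_top_iff_one P).mp Ideal.IsPrime.ne_top', by rwa [one_smul]⟩

theorem LocallyMem.mul [P.IsPrime] (hx : B.LocallyMem P x) (hy : B.LocallyMem P y) :
    B.LocallyMem P (x * y) := by
  obtain ⟨σ, hσ, hσx⟩ := hx
  obtain ⟨τ, hτ, hτy⟩ := hy
  refine ⟨σ * τ, P.primeCompl.mul_mem hσ hτ, ?_⟩
  rw [← smul_mul_smul_comm]
  exact mul_mem hσx hτy

theorem LocallyInvMem.mul [P.IsPrime] (hx : B.LocallyInvMem P x) (hy : B.LocallyInvMem P y) :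
    B.LocallyInvMem P (x * y) := by
  obtain ⟨σ, hσ, β, hβ, hβx⟩ := hx
  obtain ⟨τ, hτ, γ, hγ, hγy⟩ := hy
  exact ⟨σ * τ, P.primeCompl.mul_mem hσ hτ, β * γ, mul_mem hβ hγ,
    by rw [map_mul, ← hβx, ← hγy]; ring⟩

theorem LocallyMem.pow [P.IsPrime] (hx : B.LocallyMem P x) (n : ℕ) :
    B.LocallyMem P (x ^ n) := by
  induction n with
  | zero => exact locallyMem_of_mem (by rw [pow_zero]; exact one_mem B)
  | succ n ih => rw [pow_succ]; exact ih.mul hx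

theorem LocallyInvMem.pow [P.IsPrime] (hx : B.LocallyInvMem P x) (n : ℕ) :
    B.LocallyInvMem P (x ^ n) := by
  induction n with
  | zero =>
    exact ⟨1, (Ideal.ne_top_iff_one P).mp Ideal.IsPrime.ne_top', 1, one_mem B, by simp⟩
  | succ n ih => rw [pow_succ]; exact ih.mul hx

theorem LocallyMem.of_smul [P.IsPrime] {σ : R} (hσ : σ ∉ P) (h : B.LocallyMem P (σ • x)) :
    B.LocallyMem P x := by
  obtain ⟨τ, hτ, hτx⟩ := h
  exact ⟨τ * σ, P.primeCompl.mul_mem hτ hσ, by rwa [mul_smul]⟩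

theorem LocallyInvMem.of_smul {σ : R} (hσB : algebraMap R S σ ∈ B)
    (h : B.LocallyInvMem P (σ • x)) : B.LocallyInvMem P x := by
  obtain ⟨τ, hτ, β, hβ, hβx⟩ := h
  exact ⟨τ, hτ, β * algebraMap R S σ, mul_mem hβ hσB, by rw [← hβx, Algebra.smul_def]; ring⟩

variable {S' : Type*} [CommRing S'] [Algebra R S'] {B' : Subring S'}

theorem LocallyMem.map (h : B.LocallyMem P x) (φ : S →ₐ[R] S') (hφ : ∀ b ∈ B, φ b ∈ B') :
    B'.LocallyMem P (φ x) := by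
  obtain ⟨σ, hσ, hσx⟩ := h
  exact ⟨σ, hσ, by rw [← map_smul]; exact hφ _ hσx⟩

theorem LocallyInvMem.map (h : B.LocallyInvMem P x) (φ : S →ₐ[R] S')
    (hφ : ∀ b ∈ B, φ b ∈ B') :
    B'.LocallyInvMem P (φ x) := by
  obtain ⟨σ, hσ, β, hβ, hβx⟩ := h
  exact ⟨σ, hσ, φ β, hφ β hβ, by rw [← map_mul, hβx, AlgHom.commutes]⟩

end Subring

theorem Subring.IsPruferExtension.locallyMem_or_locallyInvMem {A : Type*} [CommRing A]
    {Aplus : Subring A} (hpr : Aplus.IsPruferExtension) (P : Ideal Aplus) (hP : P.IsMaximal)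
    (y : A) : Aplus.LocallyMem P y ∨ Aplus.LocallyInvMem P y := by
  have := hP.isPrime
  obtain ⟨-, hpair⟩ := hpr P hP
  by_cases hy : algebraMap A (Localization (P.primeCompl.map (algebraMap Aplus A))) y ∈
      (IsLocalization.map _ (algebraMap Aplus A) (Submonoid.le_comap_map P.primeCompl) :
        Localization P.primeCompl →+* _).range
  · obtain ⟨z, hz⟩ := hy
    obtain ⟨σ, hσ, a, ha⟩ :=
      exists_smul_eq_smul_of_algebraMap_mul_map_eq P 1 y z (by rw [map_one, one_mul, hz])
    exact Or.inl ⟨σ, hσ, by rw [← ha, Algebra.smul_def, mul_one]; exact a.2⟩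
  · obtain ⟨_, ⟨z, rfl⟩, hz⟩ := hpair _ hy
    obtain ⟨σ, hσ, a, ha⟩ :=
      exists_smul_eq_smul_of_algebraMap_mul_map_eq P y 1 z (by rw [hz, map_one])
    exact Or.inr ⟨σ, hσ, a, a.2, by rwa [Algebra.smul_def, Algebra.smul_def, mul_one] at ha⟩

theorem exists_pow_mul_mem_of_isIntegral {S : Type*} [CommRing S] {B : Subring S} {x β τ : S}
    (hβ : β ∈ B) (hτ : τ ∈ B) (h : β * x = τ) (hx : IsIntegral B x) :
    ∃ n : ℕ, τ ^ n * x ∈ B := by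
  obtain ⟨p, hp, hpx⟩ := hx
  subst h
  set n := p.natDegree
  have hxn : x ^ n = -∑ i ∈ Finset.range n, algebraMap B S (p.coeff i) * x ^ i := by
    have := congrArg (Polynomial.eval₂ (algebraMap B S) x) hp.as_sum
    simp only [Polynomial.eval₂_add, Polynomial.eval₂_X_pow, Polynomial.eval₂_finsetSum,
      Polynomial.eval₂_mul, Polynomial.eval₂_C, hpx] at this
    linear_combination -this
  refine ⟨n, ?_⟩
  have : (β * x) ^ n * x = -∑ i ∈ Finset.range n,
      algebraMap B S (p.coeff i) * (β ^ (n - (i + 1)) * (β * x) ^ (i + 1)) := by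
    rw [mul_pow, hxn]
    simp only [mul_neg, neg_mul, neg_inj, Finset.mul_sum, Finset.sum_mul]
    refine Finset.sum_congr rfl fun i hi => ?_
    have hi : i + 1 ≤ n := Finset.mem_range.mp hi
    rw [← pow_sub_mul_pow β hi]
    generalize n - (i + 1) = k
    ring
  rw [this]
  exact neg_mem (sum_mem fun i _ =>
    mul_mem (SetLike.coe_mem _) (mul_mem (pow_mem hβ _) (pow_mem hτ _)))

namespace Subring

variable {R S : Type*} [CommRing R] [CommRing S] [Algebra R S] (B : Subring S)

theorem mem_of_forall_isMaximal_exists_pow_smul_mem (hRB : ∀ r : R, algebraMap R S r ∈ B)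
    {x : S}
    (h : ∀ P : Ideal R, P.IsMaximal → ∃ σ ∉ P, ∃ n : ℕ, σ ^ n • x ∈ B) : x ∈ B := by
  let B' : Submodule R S :=
    { carrier := B
      add_mem' := B.add_mem
      zero_mem' := B.zero_mem
      smul_mem' := fun r b hb => by rw [Algebra.smul_def]; exact B.mul_mem (hRB r) hb }
  refine B'.mem_of_span_eq_top_of_smul_pow_mem {σ | ∃ n : ℕ, σ ^ n • x ∈ B} ?_ x fun σ => σ.2
  by_contra hne
  obtain ⟨P, hP, hle⟩ := Ideal.exists_le_maximal _ hne
  obtain ⟨σ, hσ, hσx⟩ := h P hP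
  exact hσ (hle (Ideal.subset_span hσx))

theorem mem_of_isIntegral_of_locallyMem_or_locallyInvMem (hRB : ∀ r : R, algebraMap R S r ∈ B)
    {x : S} (hx : IsIntegral B x)
    (h : ∀ P : Ideal R, P.IsMaximal → B.LocallyMem P x ∨ B.LocallyInvMem P x) : x ∈ B := by
  refine B.mem_of_forall_isMaximal_exists_pow_smul_mem hRB fun P hP => ?_
  rcases h P hP with ⟨σ, hσ, hσx⟩ | ⟨σ, hσ, β, hβ, hβx⟩
  · exact ⟨σ, hσ, 1, by rwa [pow_one]⟩
  · obtain ⟨n, hn⟩ := exists_pow_mul_mem_of_isIntegral hβ (hRB σ) hβx hx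
    exact ⟨σ, hσ, n, by rwa [Algebra.smul_def, map_pow]⟩

end Subring

theorem Subring.locallyMem_or_locallyInvMem_of_isLocalizationAway {R A S : Type*} [CommRing R]
    [CommRing A] [CommRing S] [Algebra R A] [Algebra A S] [Algebra R S] [IsScalarTower R A S]
    (f : A) [IsLocalization.Away f S] {B₀ : Subring A} {B : Subring S}
    (hB : ∀ b ∈ B₀, algebraMap A S b ∈ B) (hRB : ∀ r : R, algebraMap R S r ∈ B)
    (hf : IsLocalization.Away.invSelf f ∈ B) (P : Ideal R) [P.IsPrime]
    (hA : ∀ y : A, B₀.LocallyMem P y ∨ B₀.LocallyInvMem P y) (x : S) :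
    B.LocallyMem P x ∨ B.LocallyInvMem P x := by
  let ψ := IsScalarTower.toAlgHom R A S
  set u := IsLocalization.Away.invSelf (S := S) f
  obtain ⟨m, y, hxy⟩ := IsLocalization.Away.surj f x
  have hx : x = ψ y * u ^ m := by
    rw [IsScalarTower.coe_toAlgHom', ← hxy, mul_assoc, ← mul_pow, IsLocalization.Away.mul_invSelf,
      one_pow, mul_one]
  rcases hA f with ⟨σ, hσ, hσf⟩ | ⟨σ, hσ, β, hβ, hβf⟩
  · have hu : B.LocallyInvMem P u := ⟨σ, hσ, ψ (σ • f), hB _ hσf, by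
      rw [map_smul, smul_mul_assoc, IsScalarTower.coe_toAlgHom', IsLocalization.Away.mul_invSelf,
        Algebra.smul_def, mul_one]⟩
    rw [hx]
    rcases hA y with hy | hy
    · exact Or.inl ((hy.map ψ hB).mul ((Subring.locallyMem_of_mem hf).pow m))
    · exact Or.inr ((hy.map ψ hB).mul (hu.pow m))
  · have hσx : σ ^ m • x = ψ (β ^ m * y) := by
      simp only [ψ, IsScalarTower.coe_toAlgHom', Algebra.smul_def, map_pow, map_mul, ← hxy,
        IsScalarTower.algebraMap_apply R A S, ← hβf]
      ring
    rcases hA (β ^ m * y) with h | h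
    · exact Or.inl (Subring.LocallyMem.of_smul (P.primeCompl.pow_mem hσ m) (hσx ▸ h.map ψ hB))
    · exact Or.inr (Subring.LocallyInvMem.of_smul (hRB _) (hσx ▸ h.map ψ hB))

/-- Let `A⁺ ⊆ A` be commutative rings with weakly surjective inclusion and
`f ∈ A`.  Let `A⁺[f]` be the subring of `A` generated by `A⁺` and `f`, `A_f` the localization of
`A` at `f`, `A⁺[1/f]` the subring of `A_f` generated by the image of `A⁺` and `1/f`, `C` the
integral closure of `A⁺[f]` in `A`, and `C_f` the integral closure of `A⁺[1/f]` in `A_f`.  Then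
the natural homomorphisms `A ⊗_{A⁺} C → A` and `A ⊗_{A⁺} C_f → A_f` are isomorphisms.  If,
moreover, `A⁺ ⊆ A` is a Prüfer extension and `A` is noetherian, then `A⁺[f]` is integrally
closed in `A` and `A⁺[1/f]` is integrally closed in `A_f`. -/
theorem statement7 {A : Type*} [CommRing A] (Aplus : Subring A)
    (hws : (algebraMap ↥Aplus A).WeaklySurjective) (f : A) :
    let Af := Localization.Away f
    let B1 : Subring A := Subring.closure ((Aplus : Set A) ∪ {f})
    let B2 : Subring Af := Subring.closure
      (((algebraMap A Af) '' (Aplus : Set A)) ∪ {IsLocalization.Away.invSelf (S := Af) f})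
    let C : Subring A := (integralClosure ↥B1 A).toSubring
    let Cf : Subring Af := (integralClosure ↥B2 Af).toSubring
    let Csub : Submodule ↥Aplus A := Submodule.span ↥Aplus (C : Set A)
    let Cfsub : Submodule ↥Aplus Af := Submodule.span ↥Aplus (Cf : Set Af)
    (Function.Bijective
        (TensorProduct.lift ((LinearMap.mul ↥Aplus A).compl₂ Csub.subtype) :
          A ⊗[↥Aplus] ↥Csub →ₗ[↥Aplus] A) ∧
      Function.Bijective
        (TensorProduct.lift
          (((LinearMap.mul ↥Aplus Af).comp
              (IsScalarTower.toAlgHom ↥Aplus A Af).toLinearMap).compl₂ Cfsub.subtype) :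
          A ⊗[↥Aplus] ↥Cfsub →ₗ[↥Aplus] Af)) ∧
    (Aplus.IsPruferExtension → IsNoetherianRing A →
      (∀ x : A, IsIntegral ↥B1 x → x ∈ B1) ∧ (∀ x : Af, IsIntegral ↥B2 x → x ∈ B2)) := by
  intro Af B1 B2 C Cf Csub Cfsub
  have hD := hws.map_colon_eq_top
  have hAB1 : ∀ a ∈ Aplus, a ∈ B1 := fun a ha => Subring.subset_closure (Or.inl ha)
  have hAB2 : ∀ a ∈ Aplus, algebraMap A Af a ∈ B2 := fun a ha =>
    Subring.subset_closure (Or.inl ⟨a, ha, rfl⟩)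
  have hfB2 : IsLocalization.Away.invSelf f ∈ B2 := Subring.subset_closure (Or.inr rfl)
  refine ⟨⟨?_, ?_⟩, fun hpr _ => ⟨fun x hx => ?_, fun x hx => ?_⟩⟩
  · have := IsLocalization.of_le_isUnit (bot_le : (⊥ : Submonoid A) ≤ IsUnit.submonoid A)
    refine tensorProduct_bijective_of_isLocalization hD ⊥ Csub (fun t ht => ?_) _ (by simp)
    exact ⟨1, Submodule.subset_span (one_mem C), by rw [Submonoid.mem_bot.mp ht, map_one, one_mul]⟩
  · refine tensorProduct_bijective_of_isLocalization hD (Submonoid.powers f) Cfsub ?_ _ (by simp)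
    rintro _ ⟨k, rfl⟩
    refine ⟨IsLocalization.Away.invSelf f ^ k,
      Submodule.subset_span ((integralClosure B2 Af).algebraMap_mem ⟨_, pow_mem hfB2 k⟩), ?_⟩
    rw [map_pow, ← mul_pow, IsLocalization.Away.mul_invSelf, one_pow]
  · refine B1.mem_of_isIntegral_of_locallyMem_or_locallyInvMem (fun r : Aplus => hAB1 r r.2) hx
      fun P hP => ?_
    exact (hpr.locallyMem_or_locallyInvMem P hP x).imp (·.map (AlgHom.id _ A) hAB1)
      (·.map (AlgHom.id _ A) hAB1)
  · refine B2.mem_of_isIntegral_of_locallyMem_or_locallyInvMem (fun r : Aplus => hAB2 r r.2) hx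
      fun P hP => ?_
    have := hP.isPrime
    exact Subring.locallyMem_or_locallyInvMem_of_isLocalizationAway f hAB2
      (fun r : Aplus => hAB2 r r.2) hfB2 P (hpr.locallyMem_or_locallyInvMem P hP) x
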